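/- Let m ≥ 1 and let α, k ∈ ℝ^m be nonzero vectors with nonnegative entries arranged in nondecreasing order. For a nonzero vector x ∈ ℝ^m with nonnegative entries, define the 2m×2m skew-symmetric matrix B(x) = diag(L(x₁),…,L(x_m)) / (√2·‖x‖), where L(a) is the 2×2 matrix [[0,−a],[a,0]]. Then the minimum over orthogonal matrices Q ∈ O(2m) of ‖B(α) − Q·B(k)·Qᵀ‖ (Frobenius norm) equals ‖α/‖α‖ − k/‖k‖‖, and this minimum is attained at Q = I. -/

import Mathlib

open Matrix

/-- Frobenius norm of a real square matrix. -/
noncomputable def frobNorm {m : ℕ} (M : Matrix (Fin m × Fin 2) (Fin m × Fin 2) ℝ) : ℝ :=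
  Real.sqrt (∑ p, ∑ q, (M p q) ^ 2)

/-- The skew-symmetric matrix `B(x) = diag(L(x₁),…,L(x_m)) / (√2 ‖x‖)`, where
`L(a) = [[0,−a],[a,0]]`, as a `2m × 2m` matrix indexed by `Fin m × Fin 2`. -/
noncomputable def Bmat {m : ℕ} (x : EuclideanSpace ℝ (Fin m)) :
    Matrix (Fin m × Fin 2) (Fin m × Fin 2) ℝ :=
  Matrix.of fun p q =>
    if p.1 = q.1 then
      (if p.2 = 0 then if q.2 = 1 then -(x p.1) else 0
       else if q.2 = 0 then x p.1 else 0) / (Real.sqrt 2 * ‖x‖)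
    else 0

/-!
Both `B(α)` and `Q B(k) Qᵀ` have unit Frobenius norm, so the squared distance is
`2 - 2 ⟨B(α), Q B(k) Qᵀ⟩`. Writing `a = α / ‖α‖`, `b = k / ‖k‖` and `Qᵢⱼ` for the `(i, j)` 2×2
block of `Q`, the Frobenius inner product is `∑ᵢⱼ aᵢ bⱼ det Qᵢⱼ`. Each `det Qᵢⱼ` is at most
`‖Qᵢⱼ‖² / 2`, and for orthogonal `Q` these numbers form a doubly stochastic matrix `S`. By
Birkhoff's theorem and the rearrangement inequality, `∑ᵢⱼ aᵢ bⱼ Sᵢⱼ ≤ ∑ᵢ aᵢ bᵢ` for similarly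
ordered `a`, `b`, and the right-hand side is the inner product at `Q = 1`.
-/

theorem det_fin_two_le_half_sum_sq (A : Matrix (Fin 2) (Fin 2) ℝ) :
    A.det ≤ (∑ a, ∑ b, A a b ^ 2) / 2 := by
  simp only [det_fin_two, Fin.sum_univ_two]
  nlinarith [sq_nonneg (A 0 0 - A 1 1), sq_nonneg (A 0 1 + A 1 0)]

section FrobeniusSums
variable {n : Type*} [Fintype n]

theorem sum_sq_sub_eq (A B : Matrix n n ℝ) :
    ∑ p, ∑ q, (A - B) p q ^ 2
      = ∑ p, ∑ q, A p q ^ 2 + ∑ p, ∑ q, B p q ^ 2 - 2 * ∑ p, ∑ q, A p q * B p q := by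
  simp only [Matrix.sub_apply, sub_sq, Finset.sum_add_distrib, Finset.sum_sub_distrib,
    Finset.mul_sum]
  ring_nf

theorem sum_sq_eq_trace_mul_transpose (M : Matrix n n ℝ) :
    ∑ p, ∑ q, M p q ^ 2 = (M * Mᵀ).trace := by
  simp [Matrix.trace, Matrix.mul_apply, sq]

theorem sum_sq_conj_of_transpose_mul_self_eq_one [DecidableEq n] {Q : Matrix n n ℝ}
    (hQ : Qᵀ * Q = 1) (M : Matrix n n ℝ) :
    ∑ p, ∑ q, (Q * M * Qᵀ) p q ^ 2 = ∑ p, ∑ q, M p q ^ 2 := by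
  have hconj : Q * M * Qᵀ * (Q * M * Qᵀ)ᵀ = Q * (M * Mᵀ) * Qᵀ := by
    simp only [Matrix.transpose_mul, Matrix.transpose_transpose, Matrix.mul_assoc]
    rw [← Matrix.mul_assoc Qᵀ Q, hQ, Matrix.one_mul]
  rw [sum_sq_eq_trace_mul_transpose, sum_sq_eq_trace_mul_transpose, hconj,
    Matrix.trace_mul_cycle, hQ, Matrix.one_mul]

theorem sum_sq_row_eq_one_of_mul_transpose_eq_one [DecidableEq n] {Q : Matrix n n ℝ}
    (hQ : Q * Qᵀ = 1) (p : n) : ∑ r, Q p r ^ 2 = 1 := by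
  simpa [Matrix.mul_apply, sq] using congrFun (congrFun hQ p) p

end FrobeniusSums

-- By Birkhoff's theorem it suffices to treat permutation matrices: the rearrangement inequality.
theorem sum_sum_mul_mul_le_of_mem_doublyStochastic {ι : Type*} [Fintype ι] [DecidableEq ι]
    {f g : ι → ℝ} (hfg : Monovary f g) {S : Matrix ι ι ℝ} (hS : S ∈ doublyStochastic ℝ ι) :
    ∑ i, ∑ j, f i * g j * S i j ≤ ∑ i, f i * g i := by
  rw [← SetLike.mem_coe, doublyStochastic_eq_convexHull_permMatrix] at hS
  refine convexHull_min (t := {S : Matrix ι ι ℝ | ∑ i, ∑ j, f i * g j * S i j ≤ ∑ i, f i * g i})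
    ?_ (convex_halfSpace_le ?_ _) hS
  · rintro _ ⟨σ, rfl⟩
    simpa [PEquiv.toMatrix_apply, eq_comm] using hfg.sum_mul_comp_perm_le_sum_mul (σ := σ)
  · constructor
    · intro A B
      simp only [Matrix.add_apply, mul_add, Finset.sum_add_distrib]
    · intro c A
      simp only [Matrix.smul_apply, smul_eq_mul, Finset.mul_sum]
      refine Finset.sum_congr rfl fun i _ => Finset.sum_congr rfl fun j _ => by ring

section Blocks
variable {ι : Type*} [Fintype ι]

noncomputable def blockWeight (Q : Matrix (ι × Fin 2) (ι × Fin 2) ℝ) : Matrix ι ι ℝ :=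
  Matrix.of fun i j => (∑ a, ∑ b, Q (i, a) (j, b) ^ 2) / 2

theorem blockWeight_mem_doublyStochastic [DecidableEq ι] {Q : Matrix (ι × Fin 2) (ι × Fin 2) ℝ}
    (hQ : Qᵀ * Q = 1) : blockWeight Q ∈ doublyStochastic ℝ ι := by
  have hrow := sum_sq_row_eq_one_of_mul_transpose_eq_one (mul_eq_one_comm.mp hQ)
  have hcol := sum_sq_row_eq_one_of_mul_transpose_eq_one (Q := Qᵀ) (by simpa using hQ)
  refine mem_doublyStochastic_iff_sum.mpr ⟨fun i j => ?_, fun i => ?_, fun j => ?_⟩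
  · simp only [blockWeight, of_apply]; positivity
  · have h : ∀ a, ∑ j, ∑ b, Q (i, a) (j, b) ^ 2 = 1 := fun a => by
      rw [← hrow (i, a), Fintype.sum_prod_type]
    simp only [blockWeight, of_apply, ← Finset.sum_div]
    rw [Finset.sum_comm]
    simp only [h]
    norm_num
  · have h : ∀ b, ∑ i, ∑ a, Q (i, a) (j, b) ^ 2 = 1 := fun b => by
      rw [← hcol (j, b), Fintype.sum_prod_type]; rfl
    simp only [blockWeight, of_apply, ← Finset.sum_div]
    rw [Finset.sum_congr rfl fun i _ => Finset.sum_comm, Finset.sum_comm]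
    simp only [h]
    norm_num

theorem sum_mul_mul_det_block_le [DecidableEq ι] {f g : ι → ℝ} (hf : 0 ≤ f) (hg : 0 ≤ g)
    (hfg : Monovary f g) {Q : Matrix (ι × Fin 2) (ι × Fin 2) ℝ} (hQ : Qᵀ * Q = 1) :
    ∑ i, ∑ j, f i * g j * (Q.submatrix (Prod.mk i) (Prod.mk j)).det ≤ ∑ i, f i * g i :=
  calc ∑ i, ∑ j, f i * g j * (Q.submatrix (Prod.mk i) (Prod.mk j)).det
      ≤ ∑ i, ∑ j, f i * g j * blockWeight Q i j := by
        gcongr with i _ j _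
        · exact mul_nonneg (hf i) (hg j)
        · exact det_fin_two_le_half_sum_sq _
    _ ≤ ∑ i, f i * g i :=
        sum_sum_mul_mul_le_of_mem_doublyStochastic hfg (blockWeight_mem_doublyStochastic hQ)

end Blocks

theorem norm_inv_smul_sub_inv_smul {E : Type*} [NormedAddCommGroup E] [InnerProductSpace ℝ E]
    {x y : E} (hx : x ≠ 0) (hy : y ≠ 0) :
    ‖‖x‖⁻¹ • x - ‖y‖⁻¹ • y‖ = Real.sqrt (2 - 2 * ((‖x‖ * ‖y‖)⁻¹ * inner ℝ x y)) := by
  have hx' : ‖x‖ ≠ 0 := norm_ne_zero_iff.mpr hx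
  have hy' : ‖y‖ ≠ 0 := norm_ne_zero_iff.mpr hy
  rw [← Real.sqrt_sq (norm_nonneg _), norm_sub_sq_real, real_inner_smul_left,
    real_inner_smul_right]
  simp only [norm_smul, norm_inv, norm_norm, inv_mul_cancel₀ hx', inv_mul_cancel₀ hy']
  ring_nf

section Bmat
variable {m : ℕ}

theorem sum_Bmat_mul (x : EuclideanSpace ℝ (Fin m))
    (g : Matrix (Fin m × Fin 2) (Fin m × Fin 2) ℝ) :
    ∑ p, ∑ q, Bmat x p q * g p q
      = ∑ i, x i / (Real.sqrt 2 * ‖x‖) * (g (i, 1) (i, 0) - g (i, 0) (i, 1)) := by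
  simp only [Bmat, Fin.isValue, div_eq_mul_inv, _root_.mul_inv_rev, mul_comm, ite_mul, neg_mul,
    zero_mul, of_apply, mul_ite, mul_neg, mul_zero, Fintype.sum_prod_type, Finset.sum_ite_irrel,
    Finset.sum_ite_eq', Finset.mem_univ, ↓reduceIte, Finset.sum_const_zero, Finset.sum_ite_eq,
    Fin.sum_univ_two, one_ne_zero]
  exact Finset.sum_congr rfl fun i _ => by ring

theorem conj_Bmat_apply (x : EuclideanSpace ℝ (Fin m))
    (Q : Matrix (Fin m × Fin 2) (Fin m × Fin 2) ℝ) (p q : Fin m × Fin 2) :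
    (Q * Bmat x * Qᵀ) p q
      = ∑ j, x j / (Real.sqrt 2 * ‖x‖) * (Q p (j, 1) * Q q (j, 0) - Q p (j, 0) * Q q (j, 1)) := by
  simp only [Bmat, Fin.isValue, Matrix.mul_apply, of_apply, mul_ite, mul_zero,
    Fintype.sum_prod_type, Finset.sum_ite_irrel, Fin.sum_univ_two, ↓reduceIte, one_ne_zero,
    Finset.sum_const_zero, Finset.sum_ite_eq', Finset.mem_univ, transpose_apply, zero_ne_one,
    zero_div, zero_add, add_zero]
  exact Finset.sum_congr rfl fun i _ => by ring

theorem sum_Bmat_mul_conj_Bmat (x y : EuclideanSpace ℝ (Fin m))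
    (Q : Matrix (Fin m × Fin 2) (Fin m × Fin 2) ℝ) :
    ∑ p, ∑ q, Bmat x p q * (Q * Bmat y * Qᵀ) p q
      = (‖x‖ * ‖y‖)⁻¹ * ∑ i, ∑ j, x i * y j * (Q.submatrix (Prod.mk i) (Prod.mk j)).det := by
  have h2 : (Real.sqrt 2)⁻¹ ^ 2 = 2⁻¹ := by rw [inv_pow, Real.sq_sqrt zero_le_two]
  rw [sum_Bmat_mul, Finset.mul_sum]
  simp only [conj_Bmat_apply, ← Finset.sum_sub_distrib, Finset.mul_sum, det_fin_two,
    submatrix_apply]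
  refine Finset.sum_congr rfl fun i _ => Finset.sum_congr rfl fun j _ => ?_
  simp only [div_eq_mul_inv, mul_inv]
  linear_combination 2 * ‖x‖⁻¹ * ‖y‖⁻¹ * x i * y j *
    (Q (i, 0) (j, 0) * Q (i, 1) (j, 1) - Q (i, 0) (j, 1) * Q (i, 1) (j, 0)) * h2

theorem sum_Bmat_mul_Bmat (x y : EuclideanSpace ℝ (Fin m)) :
    ∑ p, ∑ q, Bmat x p q * Bmat y p q = (‖x‖ * ‖y‖)⁻¹ * inner ℝ x y := by
  have h := sum_Bmat_mul_conj_Bmat x y 1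
  simp only [Matrix.one_mul, Matrix.mul_one, Matrix.transpose_one] at h
  rw [h, PiLp.inner_apply]
  congr 1
  refine Finset.sum_congr rfl fun i _ => ?_
  simp [det_fin_two, Matrix.one_apply, mul_comm]

theorem sum_sq_Bmat {x : EuclideanSpace ℝ (Fin m)} (hx : x ≠ 0) :
    ∑ p, ∑ q, Bmat x p q ^ 2 = 1 := by
  have hx' : ‖x‖ ≠ 0 := norm_ne_zero_iff.mpr hx
  simp only [sq]
  rw [sum_Bmat_mul_Bmat, real_inner_self_eq_norm_sq]
  field_simp

theorem frobNorm_Bmat_sub_conj {x y : EuclideanSpace ℝ (Fin m)} (hx : x ≠ 0) (hy : y ≠ 0)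
    {Q : Matrix (Fin m × Fin 2) (Fin m × Fin 2) ℝ} (hQ : Qᵀ * Q = 1) :
    frobNorm (Bmat x - Q * Bmat y * Qᵀ)
      = Real.sqrt (2 - 2 * ∑ p, ∑ q, Bmat x p q * (Q * Bmat y * Qᵀ) p q) := by
  rw [frobNorm, sum_sq_sub_eq, sum_sq_conj_of_transpose_mul_self_eq_one hQ, sum_sq_Bmat hx,
    sum_sq_Bmat hy]
  ring_nf

theorem sum_Bmat_mul_conj_Bmat_le {x y : EuclideanSpace ℝ (Fin m)} (hx : ∀ i, 0 ≤ x i)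
    (hy : ∀ i, 0 ≤ y i) (hxy : Monovary (fun i => x i) (fun i => y i))
    {Q : Matrix (Fin m × Fin 2) (Fin m × Fin 2) ℝ} (hQ : Qᵀ * Q = 1) :
    ∑ p, ∑ q, Bmat x p q * (Q * Bmat y * Qᵀ) p q ≤ (‖x‖ * ‖y‖)⁻¹ * inner ℝ x y := by
  rw [sum_Bmat_mul_conj_Bmat, PiLp.inner_apply]
  refine mul_le_mul_of_nonneg_left ?_ (by positivity)
  simpa [mul_comm] using sum_mul_mul_det_block_le hx hy hxy hQ

theorem frobNorm_Bmat_sub {x y : EuclideanSpace ℝ (Fin m)} (hx : x ≠ 0) (hy : y ≠ 0) :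
    frobNorm (Bmat x - Bmat y) = ‖‖x‖⁻¹ • x - ‖y‖⁻¹ • y‖ := by
  simpa [sum_Bmat_mul_Bmat, norm_inv_smul_sub_inv_smul hx hy] using
    frobNorm_Bmat_sub_conj hx hy (Q := 1) (by simp)

theorem frobNorm_Bmat_sub_le_conj {x y : EuclideanSpace ℝ (Fin m)} (hx : x ≠ 0) (hy : y ≠ 0)
    (hx₀ : ∀ i, 0 ≤ x i) (hy₀ : ∀ i, 0 ≤ y i) (hxy : Monovary (fun i => x i) (fun i => y i))
    {Q : Matrix (Fin m × Fin 2) (Fin m × Fin 2) ℝ} (hQ : Qᵀ * Q = 1) :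
    frobNorm (Bmat x - Bmat y) ≤ frobNorm (Bmat x - Q * Bmat y * Qᵀ) := by
  rw [frobNorm_Bmat_sub hx hy, norm_inv_smul_sub_inv_smul hx hy, frobNorm_Bmat_sub_conj hx hy hQ]
  exact Real.sqrt_le_sqrt (by linarith [sum_Bmat_mul_conj_Bmat_le hx₀ hy₀ hxy hQ])

end Bmat

theorem stmt17_general {m : ℕ} (α k : EuclideanSpace ℝ (Fin m))
    (hα0 : α ≠ 0) (hk0 : k ≠ 0)
    (hαnn : ∀ i, 0 ≤ α i) (hknn : ∀ i, 0 ≤ k i)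
    (hαmono : ∀ i j : Fin m, i ≤ j → α i ≤ α j)
    (hkmono : ∀ i j : Fin m, i ≤ j → k i ≤ k j) :
    IsLeast {r : ℝ | ∃ Q : Matrix (Fin m × Fin 2) (Fin m × Fin 2) ℝ,
        Qᵀ * Q = 1 ∧ r = frobNorm (Bmat α - Q * Bmat k * Qᵀ)}
      ‖‖α‖⁻¹ • α - ‖k‖⁻¹ • k‖ ∧
    frobNorm (Bmat α - Bmat k) = ‖‖α‖⁻¹ • α - ‖k‖⁻¹ • k‖ := by
  have hId := frobNorm_Bmat_sub hα0 hk0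
  have hαk : Monovary (fun i => α i) (fun i => k i) :=
    Monotone.monovary (fun i j => hαmono i j) (fun i j => hkmono i j)
  refine ⟨⟨⟨1, by simp, by simpa using hId.symm⟩, ?_⟩, hId⟩
  rintro r ⟨Q, hQ, rfl⟩
  exact hId ▸ frobNorm_Bmat_sub_le_conj hα0 hk0 hαnn hknn hαk hQ

theorem stmt17 {m : ℕ} (hm : 1 ≤ m) (α k : EuclideanSpace ℝ (Fin m))
    (hα0 : α ≠ 0) (hk0 : k ≠ 0)
    (hαnn : ∀ i, 0 ≤ α i) (hknn : ∀ i, 0 ≤ k i)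
    (hαmono : ∀ i j : Fin m, i ≤ j → α i ≤ α j)
    (hkmono : ∀ i j : Fin m, i ≤ j → k i ≤ k j) :
    IsLeast {r : ℝ | ∃ Q : Matrix (Fin m × Fin 2) (Fin m × Fin 2) ℝ,
        Qᵀ * Q = 1 ∧ r = frobNorm (Bmat α - Q * Bmat k * Qᵀ)}
      ‖‖α‖⁻¹ • α - ‖k‖⁻¹ • k‖ ∧
    frobNorm (Bmat α - Bmat k) = ‖‖α‖⁻¹ • α - ‖k‖⁻¹ • k‖ :=
  stmt17_general α k hα0 hk0 hαnn hknn hαmono hkmono
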